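/- arXiv:1606.09064 — 5 statements merged into one kernel-verified Lean document; each statement's English description precedes it below -/
import Mathlib

section
/- Suppose (v, w): ℝ² → ℝ² is a C² solution of the system v_t = w_x, w_t = (v² + α(w + v²/2))·v_x, where α ∈ ℝ. Define z = w + (α/2)v². Then z satisfies the conservation law z_t = ((1/3 + α/6)v³ + α v w)_x. -/
/-!
By the product rule and the system, `z_t = w_t + α v v_t = (v² + α w + α v²/2) v_x + α v w_x`,
which is exactly `((1/3 + α/6) v³ + α v w)_x = (1 + α/2) v² v_x + α (v_x w + v w_x)`.
-/

open Function

section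
variable {𝕜 F : Type*} [NontriviallyNormedField 𝕜] [NormedAddCommGroup F] [NormedSpace 𝕜 F]
  {f : 𝕜 → 𝕜 → F}

theorem Differentiable.differentiableAt_uncurry_left (hf : Differentiable 𝕜 (uncurry f))
    (x t : 𝕜) : DifferentiableAt 𝕜 (fun x' => f x' t) x :=
  (hf.comp (differentiable_id.prodMk (differentiable_const t))) x

theorem Differentiable.differentiableAt_uncurry_right (hf : Differentiable 𝕜 (uncurry f))
    (x t : 𝕜) : DifferentiableAt 𝕜 (f x) t :=
  (hf.comp ((differentiable_const x).prodMk differentiable_id)) t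

end

/-- if (v,w) is a C² solution of v_t = w_x,
    w_t = (v² + α(w + v²/2))·v_x, then z := w + (α/2)v² satisfies
    z_t = ((1/3 + α/6)v³ + α v w)_x.  Here v x t, w x t. -/
theorem stmt_10 (α : ℝ) (v w z : ℝ → ℝ → ℝ)
    (hv : ContDiff ℝ 2 (Function.uncurry v)) (hw : ContDiff ℝ 2 (Function.uncurry w))
    (heq1 : ∀ x t : ℝ, deriv (fun t' => v x t') t = deriv (fun x' => w x' t) x)
    (heq2 : ∀ x t : ℝ, deriv (fun t' => w x t') t
      = ((v x t) ^ 2 + α * (w x t + (v x t) ^ 2 / 2)) * deriv (fun x' => v x' t) x)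
    (hz : ∀ x t : ℝ, z x t = w x t + (α / 2) * (v x t) ^ 2) :
    ∀ x t : ℝ,
      deriv (fun t' => z x t') t
      = deriv (fun x' => (1 / 3 + α / 6) * (v x' t) ^ 3 + α * v x' t * w x' t) x := by
  intro x t
  have hv_t := ((hv.differentiable two_ne_zero).differentiableAt_uncurry_right x t).hasDerivAt
  have hw_t := ((hw.differentiable two_ne_zero).differentiableAt_uncurry_right x t).hasDerivAt
  have hv_x := ((hv.differentiable two_ne_zero).differentiableAt_uncurry_left x t).hasDerivAt
  have hw_x := ((hw.differentiable two_ne_zero).differentiableAt_uncurry_left x t).hasDerivAt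
  have hz_t := hw_t.fun_add ((hv_t.fun_pow 2).const_mul (α / 2))
  have hflux_x := ((hv_x.fun_pow 3).const_mul (1 / 3 + α / 6)).fun_add
    ((hv_x.const_mul α).fun_mul hw_x)
  rw [show (fun t' => z x t') = _ from funext (hz x), hz_t.deriv, hflux_x.deriv, heq2, heq1]
  push_cast
  ring
end

section
/- (Poincaré-type inequality) Let I ⊂ ℝ be an open interval, Φ ∈ C²(I) strictly convex, and Ψ ∈ C¹(I) with Ψ'(s) = √(Φ''(s)). Then for every C¹ function f: 𝕋 → I with a = min f, b = max f and a < b, one has ∫_𝕋 Φ(f(x))dx − Φ(∫_𝕋 f(x)dx) ≤ C_Φ(a,b)·∫_𝕋 Φ''(f(x))·f'(x)² dx, where C_Φ(a,b) = (Φ(a) + Φ(b) − 2Φ((a+b)/2)) / (Ψ(b) − Ψ(a))². -/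
/-!
Let `m` be the mean of `f`. Since `f` takes values in `[a, b]`, convexity bounds `Φ ∘ f` by the
chord of `Φ` over `[a, b]`, so `∫ Φ ∘ f - Φ m` is at most the gap between that chord and `Φ` at `m`.
Writing the chord at `m` as `Φ a + Φ b` minus the chord at `a + b - m`, and bounding the latter
below by `Φ (a + b - m)`, midpoint convexity turns this gap into `Φ a + Φ b - 2 Φ ((a + b) / 2)`.

On the other side `((Ψ ∘ f)')² = Φ''(f) f'²`, so Cauchy–Schwarz between points where `f` attains
`a` and `b` gives `(Ψ b - Ψ a)² ≤ ∫ Φ''(f) f'²`. Strict convexity makes `Φ'` strictly increasing,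
hence `Φ''` is somewhere positive on `(a, b)` and `Ψ b - Ψ a > 0`.
-/

open intervalIntegral

open MeasureTheory Set

namespace ConvexOn

variable {s : Set ℝ} {Φ : ℝ → ℝ}

lemma deriv_deriv_nonneg (hΦ : ConvexOn ℝ s Φ) (hs : IsOpen s) (hd : DifferentiableOn ℝ Φ s)
    {x : ℝ} (hx : x ∈ s) : 0 ≤ deriv (deriv Φ) x := by
  rw [← derivWithin_of_isOpen hs hx]
  exact (hΦ.monotoneOn_deriv fun y hy => hd.differentiableAt (hs.mem_nhds hy)).derivWithin_nonneg

lemma mul_le_chord (hΦ : ConvexOn ℝ s Φ) {a b t : ℝ} (ha : a ∈ s) (hb : b ∈ s)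
    (ht : t ∈ Icc a b) : (b - a) * Φ t ≤ (b - t) * Φ a + (t - a) * Φ b := by
  rcases ht.1.eq_or_lt with rfl | hat
  · linarith
  rcases ht.2.eq_or_lt with rfl | htb
  · linarith
  exact hΦ.secant_mono_aux1 ha hb hat htb

lemma two_mul_map_midpoint_le (hΦ : ConvexOn ℝ s Φ) {x y : ℝ} (hx : x ∈ s) (hy : y ∈ s) :
    2 * Φ ((x + y) / 2) ≤ Φ x + Φ y := by
  have h := hΦ.2 hx hy (by norm_num : (0 : ℝ) ≤ 1 / 2) (by norm_num : (0 : ℝ) ≤ 1 / 2)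
    (by norm_num)
  simp only [smul_eq_mul] at h
  rw [show 1 / 2 * x + 1 / 2 * y = (x + y) / 2 by ring] at h
  linarith

theorem integral_comp_sub_comp_integral_le {α : Type*} [MeasurableSpace α] {μ : Measure α}
    [IsProbabilityMeasure μ] {a b : ℝ} (hab : a < b) (hΦ : ConvexOn ℝ (Icc a b) Φ)
    {g : α → ℝ} (hg : ∀ᵐ x ∂μ, g x ∈ Icc a b) (hgi : Integrable g μ)
    (hΦg : Integrable (fun x => Φ (g x)) μ) :
    ∫ x, Φ (g x) ∂μ - Φ (∫ x, g x ∂μ) ≤ Φ a + Φ b - 2 * Φ ((a + b) / 2) := by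
  set m := ∫ x, g x ∂μ
  have hm : m ∈ Icc a b := (convex_Icc a b).integral_mem isClosed_Icc hg hgi
  have ha : a ∈ Icc a b := left_mem_Icc.2 hab.le
  have hb : b ∈ Icc a b := right_mem_Icc.2 hab.le
  have hm' : a + b - m ∈ Icc a b := ⟨by linarith [hm.2], by linarith [hm.1]⟩
  have hchord_integral : (b - a) * ∫ x, Φ (g x) ∂μ ≤ (b - m) * Φ a + (m - a) * Φ b :=
    calc (b - a) * ∫ x, Φ (g x) ∂μ = ∫ x, (b - a) * Φ (g x) ∂μ :=
          (MeasureTheory.integral_const_mul _ _).symm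
      _ ≤ ∫ x, (Φ b - Φ a) * g x + (b * Φ a - a * Φ b) ∂μ := by
        refine integral_mono_ae (hΦg.const_mul _) ((hgi.const_mul _).add (integrable_const _)) ?_
        filter_upwards [hg] with x hx
        linarith [hΦ.mul_le_chord ha hb hx]
      _ = (b - m) * Φ a + (m - a) * Φ b := by
        rw [integral_add (hgi.const_mul _) (integrable_const _), MeasureTheory.integral_const_mul,
          MeasureTheory.integral_const]
        simp only [probReal_univ, one_smul]
        ring
  have hchord_reflected := hΦ.mul_le_chord ha hb hm'
  have hmidpoint := hΦ.two_mul_map_midpoint_le hm hm'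
  rw [show (m + (a + b - m)) / 2 = (a + b) / 2 by ring] at hmidpoint
  refine le_of_mul_le_mul_left ?_ (sub_pos.2 hab)
  linarith [mul_le_mul_of_nonneg_left hmidpoint (sub_pos.2 hab).le]

end ConvexOn

section CauchySchwarz

variable {u u' : ℝ → ℝ} {p q : ℝ}

theorem sq_sub_le_mul_integral_sq (hpq : p ≤ q) (hu : ∀ x ∈ Icc p q, HasDerivAt u (u' x) x)
    (hu' : IntervalIntegrable u' volume p q)
    (hu'2 : IntervalIntegrable (fun x => u' x ^ 2) volume p q) :
    (u q - u p) ^ 2 ≤ (q - p) * ∫ x in p..q, u' x ^ 2 := by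
  rcases hpq.eq_or_lt with rfl | hpq
  · simp
  set k := u q - u p
  set c := k / (q - p)
  have hL : 0 < q - p := sub_pos.2 hpq
  have hftc : ∫ x in p..q, u' x = k :=
    integral_eq_sub_of_hasDerivAt (fun x hx => hu x (uIcc_of_le hpq.le ▸ hx)) hu'
  have hlin : 2 * c * k - c ^ 2 * (q - p) ≤ ∫ x in p..q, u' x ^ 2 :=
    calc 2 * c * k - c ^ 2 * (q - p) = ∫ x in p..q, 2 * c * u' x - c ^ 2 := by
          rw [intervalIntegral.integral_sub (hu'.const_mul _) intervalIntegrable_const,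
            intervalIntegral.integral_const_mul, hftc, intervalIntegral.integral_const, smul_eq_mul]
          ring
      _ ≤ ∫ x in p..q, u' x ^ 2 :=
          integral_mono_on hpq.le ((hu'.const_mul _).sub intervalIntegrable_const) hu'2
            fun x _ => by nlinarith [sq_nonneg (u' x - c)]
  have hc : 2 * c * k - c ^ 2 * (q - p) = k ^ 2 / (q - p) := by
    simp only [c]; field_simp; ring
  rw [hc, div_le_iff₀ hL] at hlin
  linarith

theorem sq_sub_le_mul_integral_sq_of_mem_Icc {α β : ℝ} (hp : p ∈ Icc α β) (hq : q ∈ Icc α β)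
    (hu : ∀ x ∈ Icc α β, HasDerivAt u (u' x) x) (hu' : IntervalIntegrable u' volume α β)
    (hu'2 : IntervalIntegrable (fun x => u' x ^ 2) volume α β) :
    (u q - u p) ^ 2 ≤ (β - α) * ∫ x in α..β, u' x ^ 2 := by
  wlog hpq : p ≤ q generalizing p q
  · rw [← neg_sub, neg_sq]
    exact this hq hp (le_of_not_ge hpq)
  have hsub : Icc p q ⊆ Icc α β := Icc_subset_Icc hp.1 hq.2
  have hsub' : uIcc p q ⊆ uIcc α β := by
    rw [uIcc_of_le hpq, uIcc_of_le (hp.1.trans hp.2)]; exact hsub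
  calc (u q - u p) ^ 2 ≤ (q - p) * ∫ x in p..q, u' x ^ 2 :=
        sq_sub_le_mul_integral_sq hpq (fun x hx => hu x (hsub hx)) (hu'.mono_set hsub')
          (hu'2.mono_set hsub')
    _ ≤ (β - α) * ∫ x in α..β, u' x ^ 2 :=
        mul_le_mul (by linarith [hp.1, hq.2])
          (integral_mono_interval hp.1 hpq hq.2 (.of_forall fun x => sq_nonneg _) hu'2)
          (integral_nonneg hpq fun x _ => sq_nonneg _) (by linarith [hp.1, hp.2, hq.2])

end CauchySchwarz

lemma exists_deriv_pos_of_lt {h : ℝ → ℝ} {a b : ℝ} (hab : a < b) (hc : ContinuousOn h (Icc a b))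
    (hd : DifferentiableOn ℝ h (Ioo a b)) (hlt : h a < h b) : ∃ ξ ∈ Ioo a b, 0 < deriv h ξ := by
  obtain ⟨ξ, hξ, heq⟩ := exists_deriv_eq_slope h hab hc hd
  exact ⟨ξ, hξ, heq ▸ div_pos (sub_pos.2 hlt) (sub_pos.2 hab)⟩

lemma MonotoneOn.lt_of_deriv_ne_zero {g : ℝ → ℝ} {a b ξ : ℝ} (hg : MonotoneOn g (Icc a b))
    (hξ : ξ ∈ Ioo a b) (hd : deriv g ξ ≠ 0) : g a < g b := by
  by_contra! hle
  have hab : a ≤ b := hξ.1.le.trans hξ.2.le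
  have hconst : g =ᶠ[nhds ξ] fun _ => g a := by
    filter_upwards [isOpen_Ioo.mem_nhds hξ] with t ht
    have ht' := Ioo_subset_Icc_self ht
    exact le_antisymm ((hg ht' (right_mem_Icc.2 hab) ht'.2).trans hle)
      (hg (left_mem_Icc.2 hab) ht' ht'.1)
  exact hd (by rw [hconst.deriv_eq, deriv_const])

theorem StrictConvexOn.strictMonoOn_of_deriv_eq_sqrt {I : Set ℝ} {Φ Ψ : ℝ → ℝ} (hI : IsOpen I)
    (hIc : Convex ℝ I) (hΦ : StrictConvexOn ℝ I Φ) (hΦd : DifferentiableOn ℝ Φ I)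
    (hΦ'd : DifferentiableOn ℝ (deriv Φ) I) (hΨd : DifferentiableOn ℝ Ψ I)
    (hΨ : ∀ s ∈ I, deriv Ψ s = √(deriv (deriv Φ) s)) : StrictMonoOn Ψ I := by
  intro a ha b hb hab
  have hIcc : Icc a b ⊆ I := hIc.ordConnected.out ha hb
  have hmono : MonotoneOn Ψ (Icc a b) := by
    refine monotoneOn_of_deriv_nonneg (convex_Icc a b) (hΨd.mono hIcc).continuousOn
      (hΨd.mono (interior_subset.trans hIcc)) fun s hs => ?_
    rw [hΨ s (hIcc (interior_subset hs))]
    exact Real.sqrt_nonneg _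
  have hΦ'lt : deriv Φ a < deriv Φ b :=
    hΦ.strictMonoOn_deriv (fun s hs => hΦd.differentiableAt (hI.mem_nhds hs)) ha hb hab
  obtain ⟨ξ, hξ, hξpos⟩ := exists_deriv_pos_of_lt hab (hΦ'd.mono hIcc).continuousOn
    (hΦ'd.mono (Ioo_subset_Icc_self.trans hIcc)) hΦ'lt
  refine hmono.lt_of_deriv_ne_zero hξ ?_
  rw [hΨ ξ (hIcc (Ioo_subset_Icc_self hξ))]
  exact (Real.sqrt_pos.2 hξpos).ne'

theorem stmt_15_general (I : Set ℝ) (hIopen : IsOpen I) (hIconv : Convex ℝ I)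
    (Φ Ψ : ℝ → ℝ) (hΦreg : ContDiffOn ℝ 2 Φ I) (hΦconv : StrictConvexOn ℝ I Φ)
    (hΨreg : ContDiffOn ℝ 1 Ψ I)
    (hΨ : ∀ s ∈ I, deriv Ψ s = Real.sqrt (deriv (deriv Φ) s))
    (f : ℝ → ℝ) (hf : ContDiff ℝ 1 f)
    (hfI : ∀ x, f x ∈ I)
    (a b : ℝ) (hab : a < b)
    (ha : IsLeast (f '' Set.Icc 0 1) a) (hb : IsGreatest (f '' Set.Icc 0 1) b) :
    (∫ x in (0:ℝ)..1, Φ (f x)) - Φ (∫ x in (0:ℝ)..1, f x)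
      ≤ ((Φ a + Φ b - 2 * Φ ((a + b) / 2)) / (Ψ b - Ψ a) ^ 2)
        * ∫ x in (0:ℝ)..1, deriv (deriv Φ) (f x) * (deriv f x) ^ 2 := by
  obtain ⟨x₁, hx₁, hfx₁⟩ := ha.1
  obtain ⟨x₂, hx₂, hfx₂⟩ := hb.1
  have haI : a ∈ I := hfx₁ ▸ hfI x₁
  have hbI : b ∈ I := hfx₂ ▸ hfI x₂
  have hIcc : Icc a b ⊆ I := hIconv.ordConnected.out haI hbI
  have hΦd : DifferentiableOn ℝ Φ I := hΦreg.differentiableOn two_ne_zero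
  have hΦ'd : DifferentiableOn ℝ (deriv Φ) I :=
    (hΦreg.deriv_of_isOpen hIopen (by norm_num)).differentiableOn one_ne_zero
  have hΨd : DifferentiableOn ℝ Ψ I := hΨreg.differentiableOn one_ne_zero
  have hfc : Continuous f := hf.continuous
  have hgap : (∫ x in (0:ℝ)..1, Φ (f x)) - Φ (∫ x in (0:ℝ)..1, f x)
      ≤ Φ a + Φ b - 2 * Φ ((a + b) / 2) := by
    have : IsProbabilityMeasure (volume.restrict (Ioc (0:ℝ) 1)) := ⟨by simp⟩
    simp only [integral_of_le zero_le_one]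
    exact (hΦconv.convexOn.subset hIcc (convex_Icc a b)).integral_comp_sub_comp_integral_le hab
      (ae_restrict_of_forall_mem measurableSet_Ioc fun x hx =>
        ⟨ha.2 ⟨x, Ioc_subset_Icc_self hx, rfl⟩, hb.2 ⟨x, Ioc_subset_Icc_self hx, rfl⟩⟩)
      hfc.integrableOn_Ioc (hΦreg.continuousOn.comp_continuous hfc hfI).integrableOn_Ioc
  have hG : ∀ x, HasDerivAt (fun y => Ψ (f y)) (deriv Ψ (f x) * deriv f x) x := fun x =>
    (hΨd.differentiableAt (hIopen.mem_nhds (hfI x))).hasDerivAt.comp x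
      ((hf.differentiable one_ne_zero) x).hasDerivAt
  have hGc : Continuous fun x => deriv Ψ (f x) * deriv f x :=
    ((hΨreg.continuousOn_deriv_of_isOpen hIopen le_rfl).comp_continuous hfc hfI).mul
      (hf.continuous_deriv le_rfl)
  have hGsq : ∀ x, (deriv Ψ (f x) * deriv f x) ^ 2 = deriv (deriv Φ) (f x) * deriv f x ^ 2 :=
    fun x => by
      rw [mul_pow, hΨ _ (hfI x),
        Real.sq_sqrt (hΦconv.convexOn.deriv_deriv_nonneg hIopen hΦd (hfI x))]
  have henergy : (Ψ b - Ψ a) ^ 2 ≤ ∫ x in (0:ℝ)..1, deriv (deriv Φ) (f x) * (deriv f x) ^ 2 := by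
    simpa only [hGsq, hfx₁, hfx₂, sub_zero, one_mul] using
      sq_sub_le_mul_integral_sq_of_mem_Icc hx₁ hx₂ (fun x _ => hG x)
        (hGc.intervalIntegrable 0 1) ((hGc.pow 2).intervalIntegrable 0 1)
  have hΨlt : Ψ a < Ψ b :=
    hΦconv.strictMonoOn_of_deriv_eq_sqrt hIopen hIconv hΦd hΦ'd hΨd hΨ haI hbI hab
  have hD : 0 ≤ Φ a + Φ b - 2 * Φ ((a + b) / 2) := by
    linarith [hΦconv.convexOn.two_mul_map_midpoint_le haI hbI]
  have hc : 0 < (Ψ b - Ψ a) ^ 2 := pow_pos (sub_pos.2 hΨlt) 2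
  calc _ ≤ Φ a + Φ b - 2 * Φ ((a + b) / 2) := hgap
    _ = (Φ a + Φ b - 2 * Φ ((a + b) / 2)) / (Ψ b - Ψ a) ^ 2 * (Ψ b - Ψ a) ^ 2 :=
        (div_mul_cancel₀ _ hc.ne').symm
    _ ≤ _ := by gcongr

/-- Poincaré-type inequality. The torus 𝕋 is modeled by
    1-periodic functions on ℝ with integrals over [0,1]. -/
theorem stmt_15 (I : Set ℝ) (hIopen : IsOpen I) (hIconv : Convex ℝ I)
    (Φ Ψ : ℝ → ℝ) (hΦreg : ContDiffOn ℝ 2 Φ I) (hΦconv : StrictConvexOn ℝ I Φ)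
    (hΨreg : ContDiffOn ℝ 1 Ψ I)
    (hΨ : ∀ s ∈ I, deriv Ψ s = Real.sqrt (deriv (deriv Φ) s))
    (f : ℝ → ℝ) (hf : ContDiff ℝ 1 f) (hfper : Function.Periodic f 1)
    (hfI : ∀ x, f x ∈ I)
    (a b : ℝ) (hab : a < b)
    (ha : IsLeast (f '' Set.Icc 0 1) a) (hb : IsGreatest (f '' Set.Icc 0 1) b) :
    (∫ x in (0:ℝ)..1, Φ (f x)) - Φ (∫ x in (0:ℝ)..1, f x)
      ≤ ((Φ a + Φ b - 2 * Φ ((a + b) / 2)) / (Ψ b - Ψ a) ^ 2)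
        * ∫ x in (0:ℝ)..1, deriv (deriv Φ) (f x) * (deriv f x) ^ 2 :=
  stmt_15_general I hIopen hIconv Φ Ψ hΦreg hΦconv hΨreg hΨ f hf hfI a b hab ha hb
end

section
/- (Reverse Jensen bound) Let I ⊂ ℝ be an interval, Φ: I → ℝ convex and continuous, and f: 𝕋 → I continuous with a = min f, b = max f. Then ∫_𝕋 Φ(f(x))dx − Φ(∫_𝕋 f(x)dx) ≤ Φ(a) + Φ(b) − 2Φ((a+b)/2). -/
/-!
On `[a, b]` the convex function `Φ` lies below its chord `L`, so `∫ Φ ∘ f ≤ L m` where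
`m = ∫ f ∈ [a, b]`. Convexity at the midpoint of `m` and its reflection `a + b - m` gives
`2 Φ ((a + b) / 2) ≤ Φ m + Φ (a + b - m) ≤ Φ m + L (a + b - m)`, and since `L` is affine,
`L m + L (a + b - m) = Φ a + Φ b`.
-/

open MeasureTheory Set

/- Since `slope Φ a a = 0`, this also covers the degenerate interval `a = b`. -/
theorem ConvexOn.le_add_mul_slope {𝕜 : Type*} [Field 𝕜] [LinearOrder 𝕜]
    [IsStrictOrderedRing 𝕜] {Φ : 𝕜 → 𝕜} {a b y : 𝕜} (hΦ : ConvexOn 𝕜 (Icc a b) Φ) (hy : y ∈ Icc a b) :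
    Φ y ≤ Φ a + (y - a) * slope Φ a b := by
  rcases hy.1.eq_or_lt with rfl | hay
  · simp
  rcases hy.2.eq_or_lt with rfl | hyb
  · simpa [add_comm] using (sub_smul_slope Φ a y).ge
  have hab := hay.trans hyb
  have hchord := hΦ.secant_mono_aux1 (left_mem_Icc.2 hab.le) (right_mem_Icc.2 hab.le) hay hyb
  rw [slope_def_field, mul_div_assoc', ← sub_le_iff_le_add', le_div_iff₀ (sub_pos.2 hab)]
  linear_combination hchord

theorem ConvexOn.integral_comp_sub_map_integral_le {α : Type*} [MeasurableSpace α]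
    {μ : Measure α} [IsProbabilityMeasure μ] {Φ : ℝ → ℝ} {f : α → ℝ} {a b : ℝ}
    (hΦ : ConvexOn ℝ (Icc a b) Φ) (hfab : ∀ᵐ x ∂μ, f x ∈ Icc a b) (hf : Integrable f μ)
    (hΦf : Integrable (Φ ∘ f) μ) :
    ∫ x, Φ (f x) ∂μ - Φ (∫ x, f x ∂μ) ≤ Φ a + Φ b - 2 * Φ ((a + b) / 2) := by
  set m := ∫ x, f x ∂μ
  set s := slope Φ a b
  have hm : m ∈ Icc a b := (convex_Icc a b).integral_mem isClosed_Icc hfab hf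
  have hm' : a + b - m ∈ Icc a b := ⟨by linarith [hm.2], by linarith [hm.1]⟩
  have hchord_int : ∫ x, Φ (f x) ∂μ ≤ Φ a + (m - a) * s := calc
    ∫ x, Φ (f x) ∂μ ≤ ∫ x, Φ a + (f x - a) * s ∂μ :=
      integral_mono_ae hΦf ((integrable_const _).add ((hf.sub (integrable_const _)).mul_const _))
        (hfab.mono fun x hx => hΦ.le_add_mul_slope hx)
    _ = Φ a + (m - a) * s := by
      have hlin : Integrable (fun x => (f x - a) * s) μ :=
        (hf.sub (integrable_const a)).mul_const s
      rw [integral_add (integrable_const _) hlin,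
        integral_mul_const, integral_sub hf (integrable_const _)]
      simp [m]
  have hreflect : Φ (a + b - m) ≤ Φ a + (b - m) * s := by
    have h := hΦ.le_add_mul_slope hm'
    rwa [show a + b - m - a = b - m by ring] at h
  have hmid : Φ ((a + b) / 2) ≤ 1 / 2 * Φ m + 1 / 2 * Φ (a + b - m) := by
    have h := hΦ.2 hm hm' (by norm_num : (0:ℝ) ≤ 1 / 2) (by norm_num : (0:ℝ) ≤ 1 / 2)
      (by norm_num)
    simp only [smul_eq_mul] at h
    rwa [show 1 / 2 * m + 1 / 2 * (a + b - m) = (a + b) / 2 by ring] at h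
  have hslope : (m - a) * s + (b - m) * s = Φ b - Φ a := by
    have h := sub_smul_slope Φ a b
    rw [smul_eq_mul, vsub_eq_sub] at h
    linear_combination h
  linarith

theorem stmt_16_general (I : Set ℝ)
    (Φ : ℝ → ℝ) (hΦconv : ConvexOn ℝ I Φ) (hΦcont : ContinuousOn Φ I)
    (f : ℝ → ℝ) (hf : Continuous f)
    (hfI : ∀ x, f x ∈ I)
    (a b : ℝ)
    (ha : IsLeast (f '' Set.Icc 0 1) a) (hb : IsGreatest (f '' Set.Icc 0 1) b) :
    (∫ x in (0:ℝ)..1, Φ (f x)) - Φ (∫ x in (0:ℝ)..1, f x)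
      ≤ Φ a + Φ b - 2 * Φ ((a + b) / 2) := by
  obtain ⟨⟨x₀, -, rfl⟩, hmin⟩ := ha
  obtain ⟨⟨x₁, -, rfl⟩, hmax⟩ := hb
  have hIcc : Icc (f x₀) (f x₁) ⊆ I := hΦconv.1.ordConnected.out (hfI x₀) (hfI x₁)
  have hfab : ∀ x ∈ Ioc (0:ℝ) 1, f x ∈ Icc (f x₀) (f x₁) := fun x hx =>
    ⟨hmin ⟨x, Ioc_subset_Icc_self hx, rfl⟩, hmax ⟨x, Ioc_subset_Icc_self hx, rfl⟩⟩
  have : IsProbabilityMeasure (volume.restrict (Ioc (0:ℝ) 1)) := ⟨by simp⟩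
  rw [intervalIntegral.integral_of_le zero_le_one, intervalIntegral.integral_of_le zero_le_one]
  exact (hΦconv.subset hIcc (convex_Icc _ _)).integral_comp_sub_map_integral_le
    ((ae_restrict_iff' measurableSet_Ioc).2 (ae_of_all _ hfab)) hf.integrableOn_Ioc
    (hΦcont.comp_continuous hf hfI).integrableOn_Ioc

/-- reverse Jensen bound. The torus 𝕋 is modeled by 1-periodic
    functions on ℝ with integrals over [0,1]. -/
theorem stmt_16 (I : Set ℝ) (hIconv : Convex ℝ I)
    (Φ : ℝ → ℝ) (hΦconv : ConvexOn ℝ I Φ) (hΦcont : ContinuousOn Φ I)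
    (f : ℝ → ℝ) (hf : Continuous f) (hfper : Function.Periodic f 1)
    (hfI : ∀ x, f x ∈ I)
    (a b : ℝ)
    (ha : IsLeast (f '' Set.Icc 0 1) a) (hb : IsGreatest (f '' Set.Icc 0 1) b) :
    (∫ x in (0:ℝ)..1, Φ (f x)) - Φ (∫ x in (0:ℝ)..1, f x)
      ≤ Φ a + Φ b - 2 * Φ ((a + b) / 2) :=
  stmt_16_general I Φ hΦconv hΦcont f hf hfI a b ha hb
end

section
/- (Refined Jensen inequality) Let I ⊂ ℝ be an interval, Φ ∈ C(I) convex, and f: 𝕋 → I continuous. Set A = ∫_𝕋 f, p = |{f < A}|, q = |{f ≥ A}|, A₁ = (1/p)∫_{f<A} f, A₂ = (1/q)∫_{f≥A} f (when p, q > 0). Then ∫_𝕋 Φ(f(x))dx − Φ(A) ≥ p·Φ(A₁) + q·Φ(A₂) − (p+q)·Φ(A) ≥ 0. -/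
/-!
Split `[0, 1]` at the level `A` into `{f < A}` and `{f ≥ A}`. Jensen's inequality on each piece
gives `p Φ(A₁) + q Φ(A₂) ≤ ∫ Φ ∘ f`, and since `A = p A₁ + q A₂` with `p + q = 1`, convexity of `Φ`
at the two points `A₁, A₂` gives `Φ(A) ≤ p Φ(A₁) + q Φ(A₂)`. Jensen's inequality needs a closed
convex set of values, and `I` need not be closed: we use the interval spanned by the compact image
`f '' [0, 1]`, which lies in `I`.
-/

open MeasureTheory Set
open scoped ENNReal

theorem sep_lt_union_sep_le {α β : Type*} [LinearOrder β] (u : Set α) (f : α → β) (c : β) :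
    {x ∈ u | f x < c} ∪ {x ∈ u | c ≤ f x} = u := by
  ext x
  simp only [mem_union, mem_ofPred_eq, ← and_or_left, lt_or_ge, and_true]

theorem disjoint_sep_lt_sep_le {α β : Type*} [LinearOrder β] (u : Set α) (f : α → β) (c : β) :
    Disjoint {x ∈ u | f x < c} {x ∈ u | c ≤ f x} :=
  disjoint_left.2 fun _ h₁ h₂ => h₂.2.not_gt h₁.2

theorem IsCompact.exists_isClosed_convex_subset {K I : Set ℝ} (hK : IsCompact K)
    (hI : Convex ℝ I) (hKI : K ⊆ I) : ∃ T, IsClosed T ∧ Convex ℝ T ∧ K ⊆ T ∧ T ⊆ I := by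
  rcases K.eq_empty_or_nonempty with rfl | hne
  · exact ⟨∅, isClosed_empty, convex_empty, subset_rfl, empty_subset I⟩
  refine ⟨Icc (sInf K) (sSup K), isClosed_Icc, convex_Icc _ _,
    fun x hx => ⟨csInf_le hK.bddBelow hx, le_csSup hK.bddAbove hx⟩, ?_⟩
  exact hI.ordConnected.out (hKI (hK.sInf_mem hne)) (hKI (hK.sSup_mem hne))

section Jensen

variable {α : Type*} [MeasurableSpace α] {μ : Measure α} {s : Set ℝ} {g : ℝ → ℝ} {f : α → ℝ}
  {t t₁ t₂ u : Set α}

theorem ConvexOn.measureReal_mul_map_setAverage_le (hg : ConvexOn ℝ s g)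
    (hgc : ContinuousOn g s) (hsc : IsClosed s) (ht : 0 < μ.real t)
    (hfs : ∀ᵐ x ∂μ.restrict t, f x ∈ s) (hfi : IntegrableOn f t μ)
    (hgi : IntegrableOn (g ∘ f) t μ) :
    μ.real t * g (⨍ x in t, f x ∂μ) ≤ ∫ x in t, g (f x) ∂μ := by
  obtain ⟨h0, hfin⟩ := ENNReal.toReal_pos_iff.1 ht
  rw [← measure_smul_setAverage _ hfin.ne, smul_eq_mul]
  exact mul_le_mul_of_nonneg_left (hg.map_set_average_le hgc hsc h0.ne' hfin.ne hfs hfi hgi)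
    ht.le

theorem ConvexOn.map_setAverage_union_le (hg : ConvexOn ℝ s g) (hsc : IsClosed s)
    (hd : Disjoint t₁ t₂) (ht₂ : MeasurableSet t₂) (h₁ : 0 < μ.real t₁) (h₂ : 0 < μ.real t₂)
    (hfs : ∀ᵐ x ∂μ.restrict (t₁ ∪ t₂), f x ∈ s) (hfi : IntegrableOn f (t₁ ∪ t₂) μ) :
    (μ.real t₁ + μ.real t₂) * g (⨍ x in t₁ ∪ t₂, f x ∂μ) ≤
      μ.real t₁ * g (⨍ x in t₁, f x ∂μ) + μ.real t₂ * g (⨍ x in t₂, f x ∂μ) := by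
  obtain ⟨h0₁, hfin₁⟩ := ENNReal.toReal_pos_iff.1 h₁
  obtain ⟨h0₂, hfin₂⟩ := ENNReal.toReal_pos_iff.1 h₂
  rw [ae_restrict_union_iff] at hfs
  have hfi₁ := hfi.mono_set subset_union_left
  have hfi₂ := hfi.mono_set subset_union_right
  have hmem₁ := hg.1.set_average_mem hsc h0₁.ne' hfin₁.ne hfs.1 hfi₁
  have hmem₂ := hg.1.set_average_mem hsc h0₂.ne' hfin₂.ne hfs.2 hfi₂
  rw [average_union hd.aedisjoint ht₂.nullMeasurableSet hfin₁.ne hfin₂.ne hfi₁ hfi₂]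
  set p := μ.real t₁
  set q := μ.real t₂
  have hpq : 0 < p + q := add_pos h₁ h₂
  calc (p + q) * g ((p / (p + q)) • ⨍ x in t₁, f x ∂μ + (q / (p + q)) • ⨍ x in t₂, f x ∂μ)
      ≤ (p + q) * ((p / (p + q)) • g (⨍ x in t₁, f x ∂μ) +
          (q / (p + q)) • g (⨍ x in t₂, f x ∂μ)) := by
        gcongr
        exact hg.2 hmem₁ hmem₂ (by positivity) (by positivity) (by field_simp)
    _ = p * g (⨍ x in t₁, f x ∂μ) + q * g (⨍ x in t₂, f x ∂μ) := by
        simp only [smul_eq_mul]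
        field_simp

theorem ConvexOn.measureReal_mul_map_setAverage_add_le_setIntegral_union (hg : ConvexOn ℝ s g)
    (hgc : ContinuousOn g s) (hsc : IsClosed s) (hd : Disjoint t₁ t₂) (ht₂ : MeasurableSet t₂)
    (h₁ : 0 < μ.real t₁) (h₂ : 0 < μ.real t₂) (hfs : ∀ᵐ x ∂μ.restrict (t₁ ∪ t₂), f x ∈ s)
    (hfi : IntegrableOn f (t₁ ∪ t₂) μ) (hgi : IntegrableOn (g ∘ f) (t₁ ∪ t₂) μ) :
    μ.real t₁ * g (⨍ x in t₁, f x ∂μ) + μ.real t₂ * g (⨍ x in t₂, f x ∂μ) ≤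
      ∫ x in t₁ ∪ t₂, g (f x) ∂μ := by
  rw [ae_restrict_union_iff] at hfs
  rw [setIntegral_union (f := fun x => g (f x)) hd ht₂ (hgi.mono_set subset_union_left)
    (hgi.mono_set subset_union_right)]
  exact add_le_add
    (hg.measureReal_mul_map_setAverage_le hgc hsc h₁ hfs.1 (hfi.mono_set subset_union_left)
      (hgi.mono_set subset_union_left))
    (hg.measureReal_mul_map_setAverage_le hgc hsc h₂ hfs.2 (hfi.mono_set subset_union_right)
      (hgi.mono_set subset_union_right))

theorem measureReal_sep_lt_add_measureReal_sep_le (hf : Measurable f) (hu : MeasurableSet u)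
    (hμu : μ u ≠ ∞) (c : ℝ) :
    μ.real {x ∈ u | f x < c} + μ.real {x ∈ u | c ≤ f x} = μ.real u := by
  rw [← measureReal_union (disjoint_sep_lt_sep_le u f c)
    (hu.inter (measurableSet_le measurable_const hf))
    (measure_ne_top_of_subset (sep_subset _ _) hμu)
    (measure_ne_top_of_subset (sep_subset _ _) hμu), sep_lt_union_sep_le]

theorem ConvexOn.refined_jensen (hg : ConvexOn ℝ s g) (hgc : ContinuousOn g s)
    (hsc : IsClosed s) (hf : Measurable f) (hu : MeasurableSet u) {c : ℝ}
    (h₁ : 0 < μ.real {x ∈ u | f x < c}) (h₂ : 0 < μ.real {x ∈ u | c ≤ f x})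
    (hfs : ∀ᵐ x ∂μ.restrict u, f x ∈ s) (hfi : IntegrableOn f u μ)
    (hgi : IntegrableOn (g ∘ f) u μ) :
    (μ.real {x ∈ u | f x < c} + μ.real {x ∈ u | c ≤ f x}) * g (⨍ x in u, f x ∂μ) ≤
        μ.real {x ∈ u | f x < c} * g (⨍ x in {x ∈ u | f x < c}, f x ∂μ) +
          μ.real {x ∈ u | c ≤ f x} * g (⨍ x in {x ∈ u | c ≤ f x}, f x ∂μ) ∧
      μ.real {x ∈ u | f x < c} * g (⨍ x in {x ∈ u | f x < c}, f x ∂μ) +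
          μ.real {x ∈ u | c ≤ f x} * g (⨍ x in {x ∈ u | c ≤ f x}, f x ∂μ) ≤
        ∫ x in u, g (f x) ∂μ := by
  have hunion := sep_lt_union_sep_le u f c
  have hd := disjoint_sep_lt_sep_le u f c
  have ht₂ : MeasurableSet {x ∈ u | c ≤ f x} := hu.inter (measurableSet_le measurable_const hf)
  rw [← hunion] at hfs hfi hgi
  have hlow := hg.map_setAverage_union_le hsc hd ht₂ h₁ h₂ hfs hfi
  have hupp :=
    hg.measureReal_mul_map_setAverage_add_le_setIntegral_union hgc hsc hd ht₂ h₁ h₂ hfs hfi hgi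
  rw [hunion] at hlow hupp
  exact ⟨hlow, hupp⟩

end Jensen

theorem stmt_18_general (I : Set ℝ) (hIconv : Convex ℝ I)
    (Φ : ℝ → ℝ) (hΦconv : ConvexOn ℝ I Φ) (hΦcont : ContinuousOn Φ I)
    (f : ℝ → ℝ) (hf : Continuous f)
    (hfI : ∀ x, f x ∈ I)
    (A p q A₁ A₂ : ℝ)
    (hA : A = ∫ x in (0:ℝ)..1, f x)
    (hp : p = (volume {x ∈ Set.Icc (0:ℝ) 1 | f x < A}).toReal)
    (hq : q = (volume {x ∈ Set.Icc (0:ℝ) 1 | A ≤ f x}).toReal)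
    (hppos : 0 < p) (hqpos : 0 < q)
    (hA₁ : A₁ = (1 / p) * ∫ x in {x ∈ Set.Icc (0:ℝ) 1 | f x < A}, f x)
    (hA₂ : A₂ = (1 / q) * ∫ x in {x ∈ Set.Icc (0:ℝ) 1 | A ≤ f x}, f x) :
    (∫ x in (0:ℝ)..1, Φ (f x)) - Φ A ≥ p * Φ A₁ + q * Φ A₂ - (p + q) * Φ A ∧
    p * Φ A₁ + q * Φ A₂ - (p + q) * Φ A ≥ 0 := by
  rw [← measureReal_def] at hp hq
  have hvol : volume.real (Icc (0:ℝ) 1) = 1 := by simp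
  have hpq : p + q = 1 := by
    rw [hp, hq, measureReal_sep_lt_add_measureReal_sep_le hf.measurable measurableSet_Icc
      measure_Icc_lt_top.ne, hvol]
  obtain ⟨T, hTc, hTconv, hfT, hTI⟩ := (isCompact_Icc.image hf).exists_isClosed_convex_subset
    hIconv (image_subset_iff.2 fun x _ => hfI x)
  obtain ⟨hlow, hupp⟩ := (hΦconv.subset hTI hTconv).refined_jensen (hΦcont.mono hTI) hTc
    hf.measurable measurableSet_Icc (hp ▸ hppos) (hq ▸ hqpos)
    (ae_restrict_of_forall_mem measurableSet_Icc fun x hx => hfT (mem_image_of_mem f hx))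
    hf.integrableOn_Icc (hΦcont.comp_continuous hf hfI).integrableOn_Icc
  have hIcc : ∀ g : ℝ → ℝ, ∫ x in Icc (0:ℝ) 1, g x = ∫ x in (0:ℝ)..1, g x := fun g => by
    rw [intervalIntegral.integral_of_le zero_le_one, integral_Icc_eq_integral_Ioc]
  have hA' : ⨍ x in Icc (0:ℝ) 1, f x = A := by rw [setAverage_eq, hvol, hIcc, hA, inv_one, one_smul]
  have hA₁' : ⨍ x in {x ∈ Icc (0:ℝ) 1 | f x < A}, f x = A₁ := by
    rw [setAverage_eq, ← hp, hA₁, smul_eq_mul, one_div]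
  have hA₂' : ⨍ x in {x ∈ Icc (0:ℝ) 1 | A ≤ f x}, f x = A₂ := by
    rw [setAverage_eq, ← hq, hA₂, smul_eq_mul, one_div]
  rw [← hp, ← hq, hA', hA₁', hA₂', hpq, one_mul] at hlow
  rw [← hp, ← hq, hA₁', hA₂', hIcc] at hupp
  rw [hpq, one_mul]
  exact ⟨by linarith, by linarith⟩

/-- refined Jensen inequality. The torus 𝕋 is modeled by 1-periodic
    functions on ℝ; integrals and measures are taken over [0,1]. -/
theorem stmt_18 (I : Set ℝ) (hIconv : Convex ℝ I)
    (Φ : ℝ → ℝ) (hΦconv : ConvexOn ℝ I Φ) (hΦcont : ContinuousOn Φ I)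
    (f : ℝ → ℝ) (hf : Continuous f) (hfper : Function.Periodic f 1)
    (hfI : ∀ x, f x ∈ I)
    (A p q A₁ A₂ : ℝ)
    (hA : A = ∫ x in (0:ℝ)..1, f x)
    (hp : p = (volume {x ∈ Set.Icc (0:ℝ) 1 | f x < A}).toReal)
    (hq : q = (volume {x ∈ Set.Icc (0:ℝ) 1 | A ≤ f x}).toReal)
    (hppos : 0 < p) (hqpos : 0 < q)
    (hA₁ : A₁ = (1 / p) * ∫ x in {x ∈ Set.Icc (0:ℝ) 1 | f x < A}, f x)
    (hA₂ : A₂ = (1 / q) * ∫ x in {x ∈ Set.Icc (0:ℝ) 1 | A ≤ f x}, f x) :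
    (∫ x in (0:ℝ)..1, Φ (f x)) - Φ A ≥ p * Φ A₁ + q * Φ A₂ - (p + q) * Φ A ∧
    p * Φ A₁ + q * Φ A₂ - (p + q) * Φ A ≥ 0 :=
  stmt_18_general I hIconv Φ hΦconv hΦcont f hf hfI A p q A₁ A₂ hA hp hq hppos hqpos hA₁ hA₂
end

section
/- (Stability of Jensen's inequality) Let I ⊂ ℝ be an open interval, Φ ∈ C(I) strictly convex, A ∈ I, and (f_t)_{t>0} a family of continuous functions f_t: 𝕋 → I with ∫_𝕋 f_t = A for all t and ∫_𝕋 Φ(f_t(x))dx − Φ(A) → 0 as t → ∞. Then ∫_𝕋 |f_t(x) − A| dx → 0 as t → ∞. -/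
/-!
Subtract from `Φ` its supporting line at `A` (slope: the right derivative). The remainder, the
Bregman divergence `g = bregmanDiv Φ A`, is convex, nonnegative and vanishes only at `A`; since
`∫ f_t = A`, its mean along `f_t` is exactly the Jensen gap `∫ Φ ∘ f_t - Φ A`. Convexity makes
`g y / |y - A|` nondecreasing in `|y - A|` on each side of `A`, so with `m = min g(A ± r) > 0`
we get `m |y - A| ≤ m r + r g y`. Integrating, `∫ |f_t - A| ≤ r + (r / m) (∫ Φ ∘ f_t - Φ A)`,
and `r` can be taken as small as we like.
-/

open Filter MeasureTheory Set

namespace ConvexOn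

variable {S : Set ℝ} {g : ℝ → ℝ} {A r m y : ℝ}

lemma mul_abs_sub_le (hg : ConvexOn ℝ S g) (hA : A ∈ S) (hgA : g A = 0)
    (hg0 : ∀ y ∈ S, 0 ≤ g y) (hr : 0 < r) (hAr : A + r ∈ S) (hAr' : A - r ∈ S)
    (hm : 0 ≤ m) (hmr : m ≤ g (A + r)) (hmr' : m ≤ g (A - r)) (hy : y ∈ S) :
    m * |y - A| ≤ m * r + r * g y := by
  have hgy := hg0 y hy
  rcases le_or_gt |y - A| r with hnear | hfar
  · nlinarith [mul_le_mul_of_nonneg_left hnear hm]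
  rcases lt_abs.mp hfar with hright | hleft
  · have hsec := hg.secant_mono hA hAr hy (by linarith) (by linarith) (by linarith)
    rw [hgA, sub_zero, sub_zero, add_sub_cancel_left,
      div_le_div_iff₀ hr (by linarith)] at hsec
    rw [abs_of_pos (by linarith)]
    nlinarith
  · have hsec := hg.secant_mono hA hy hAr' (by linarith) (by linarith) (by linarith)
    rw [hgA, sub_zero, sub_zero, sub_sub_cancel_left, ← neg_sub A y, div_neg, div_neg,
      neg_le_neg_iff, div_le_div_iff₀ hr (by linarith)] at hsec
    rw [abs_of_neg (by linarith)]
    nlinarith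

end ConvexOn

/-- The slope `derivWithin Φ (Ioi A) A` is a subgradient only when `A` is interior to the domain of
convexity; elsewhere it may be a junk value. -/
noncomputable def bregmanDiv (Φ : ℝ → ℝ) (A y : ℝ) : ℝ :=
  Φ y - (Φ A + derivWithin Φ (Ioi A) A * (y - A))

@[simp]
lemma bregmanDiv_self (Φ : ℝ → ℝ) (A : ℝ) : bregmanDiv Φ A A = 0 := by
  simp [bregmanDiv]

lemma ConvexOn.convexOn_bregmanDiv {S : Set ℝ} {Φ : ℝ → ℝ} (hΦ : ConvexOn ℝ S Φ) (A : ℝ) :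
    ConvexOn ℝ S (bregmanDiv Φ A) := by
  have hℓ : ConcaveOn ℝ S fun y => Φ A + derivWithin Φ (Ioi A) A * (y - A) :=
    ⟨hΦ.1, fun _ _ _ _ a b _ _ hab => le_of_eq <| by
      simp only [smul_eq_mul]
      linear_combination (Φ A - derivWithin Φ (Ioi A) A * A) * hab⟩
  exact hΦ.sub hℓ

section Integral

variable {α : Type*} [MeasurableSpace α] {μ : Measure α} {Φ : ℝ → ℝ} {f : α → ℝ} {A : ℝ}

lemma integrable_bregmanDiv_comp [IsFiniteMeasure μ] (hf : Integrable f μ)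
    (hΦf : Integrable (fun x => Φ (f x)) μ) : Integrable (fun x => bregmanDiv Φ A (f x)) μ :=
  hΦf.sub ((integrable_const _).add ((hf.sub (integrable_const A)).const_mul _))

lemma integral_bregmanDiv_comp [IsProbabilityMeasure μ] (hf : Integrable f μ)
    (hΦf : Integrable (fun x => Φ (f x)) μ) (hmean : ∫ x, f x ∂μ = A) :
    ∫ x, bregmanDiv Φ A (f x) ∂μ = ∫ x, Φ (f x) ∂μ - Φ A := by
  have hlin : Integrable (fun x => derivWithin Φ (Ioi A) A * (f x - A)) μ :=
    (hf.sub (integrable_const A)).const_mul _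
  have hℓ : Integrable (fun x => Φ A + derivWithin Φ (Ioi A) A * (f x - A)) μ :=
    (integrable_const _).add hlin
  simp only [bregmanDiv]
  rw [integral_sub hΦf hℓ, integral_add (integrable_const _) hlin,
    integral_const_mul, integral_sub hf (integrable_const A), hmean]
  simp

end Integral

namespace StrictConvexOn

variable {S : Set ℝ} {Φ : ℝ → ℝ} {A y : ℝ}

lemma bregmanDiv_pos (hΦ : StrictConvexOn ℝ S Φ) (hA : A ∈ interior S) (hy : y ∈ S)
    (hyA : y ≠ A) : 0 < bregmanDiv Φ A y := by
  rw [bregmanDiv, sub_pos]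
  rcases hyA.lt_or_gt with hlt | hgt
  · have hslope := (hΦ.slope_lt_leftDeriv hy (interior_subset hA) hlt
      (hΦ.convexOn.differentiableWithinAt_Iio_of_mem_interior hA)).trans_le
      (hΦ.convexOn.leftDeriv_le_rightDeriv_of_mem_interior hA)
    rw [slope_def_field, div_lt_iff₀ (sub_pos.2 hlt)] at hslope
    linarith
  · have hslope := hΦ.rightDeriv_lt_slope (interior_subset hA) hy hgt
      (hΦ.convexOn.differentiableWithinAt_Ioi_of_mem_interior hA)
    rw [slope_def_field, lt_div_iff₀ (sub_pos.2 hgt)] at hslope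
    linarith

lemma bregmanDiv_nonneg (hΦ : StrictConvexOn ℝ S Φ) (hA : A ∈ interior S) (hy : y ∈ S) :
    0 ≤ bregmanDiv Φ A y := by
  rcases eq_or_ne y A with rfl | hyA
  · simp
  · exact (hΦ.bregmanDiv_pos hA hy hyA).le

end StrictConvexOn

theorem StrictConvexOn.exists_integral_abs_sub_lt {α : Type*} [MeasurableSpace α]
    {μ : Measure α} [IsProbabilityMeasure μ] {S : Set ℝ} {Φ : ℝ → ℝ} {A ε : ℝ}
    (hΦ : StrictConvexOn ℝ S Φ) (hA : A ∈ interior S) (hε : 0 < ε) :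
    ∃ δ > 0, ∀ f : α → ℝ, (∀ x, f x ∈ S) → Integrable f μ →
      Integrable (fun x => Φ (f x)) μ → ∫ x, f x ∂μ = A →
      ∫ x, Φ (f x) ∂μ - Φ A < δ → ∫ x, |f x - A| ∂μ < ε := by
  obtain ⟨r₀, hr₀, hball⟩ := Metric.mem_nhds_iff.1 (mem_interior_iff_mem_nhds.1 hA)
  set r := min (r₀ / 2) (ε / 2)
  have hr : 0 < r := lt_min (by linarith) (by linarith)
  have hmem : ∀ y, |y - A| = r → y ∈ S := fun y hy =>
    hball <| by rw [Metric.mem_ball, Real.dist_eq, hy]; linarith [min_le_left (r₀ / 2) (ε / 2)]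
  have hAr : A + r ∈ S := hmem _ <| by rw [add_sub_cancel_left, abs_of_pos hr]
  have hAr' : A - r ∈ S := hmem _ <| by rw [sub_sub_cancel_left, abs_neg, abs_of_pos hr]
  set m := min (bregmanDiv Φ A (A + r)) (bregmanDiv Φ A (A - r))
  have hm : 0 < m := lt_min (hΦ.bregmanDiv_pos hA hAr (by linarith))
    (hΦ.bregmanDiv_pos hA hAr' (by linarith))
  -- chosen so that `r + (r / m) δ ≤ ε`
  refine ⟨ε * m / (2 * r), by positivity, fun f hfS hf hΦf hmean hgap => ?_⟩
  have hpt (x : α) : m * |f x - A| ≤ m * r + r * bregmanDiv Φ A (f x) :=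
    (hΦ.convexOn.convexOn_bregmanDiv A).mul_abs_sub_le (interior_subset hA)
      (bregmanDiv_self Φ A) (fun y hy => hΦ.bregmanDiv_nonneg hA hy) hr hAr hAr' hm.le
      (min_le_left _ _) (min_le_right _ _) (hfS x)
  have hint : m * ∫ x, |f x - A| ∂μ ≤ m * r + r * (∫ x, Φ (f x) ∂μ - Φ A) := by
    have hg := integrable_bregmanDiv_comp (A := A) hf hΦf
    calc m * ∫ x, |f x - A| ∂μ = ∫ x, m * |f x - A| ∂μ := (integral_const_mul _ _).symm
      _ ≤ ∫ x, (m * r + r * bregmanDiv Φ A (f x)) ∂μ :=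
        integral_mono ((hf.sub (integrable_const A)).abs.const_mul m)
          ((integrable_const _).add (hg.const_mul r)) hpt
      _ = m * r + r * (∫ x, Φ (f x) ∂μ - Φ A) := by
        rw [integral_add (integrable_const _) (hg.const_mul r), integral_const_mul r,
          integral_bregmanDiv_comp hf hΦf hmean]
        simp
  have hrδ : r * (ε * m / (2 * r)) = ε * m / 2 := by field_simp
  have hmr : m * r ≤ m * (ε / 2) := mul_le_mul_of_nonneg_left (min_le_right _ _) hm.le
  have hgap' := mul_lt_mul_of_pos_left hgap hr
  exact lt_of_mul_lt_mul_left (by linarith) hm.le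

theorem stmt_19_general (I : Set ℝ) (hIopen : IsOpen I)
    (Φ : ℝ → ℝ) (hΦcont : ContinuousOn Φ I) (hΦconv : StrictConvexOn ℝ I Φ)
    (A : ℝ) (hA : A ∈ I)
    (f : ℝ → ℝ → ℝ)
    (hfc : ∀ t > (0:ℝ), Continuous (f t))
    (hfI : ∀ t > (0:ℝ), ∀ x, f t x ∈ I)
    (hmean : ∀ t > (0:ℝ), (∫ x in (0:ℝ)..1, f t x) = A)
    (hconv : Tendsto (fun t => (∫ x in (0:ℝ)..1, Φ (f t x)) - Φ A) atTop (nhds 0)) :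
    Tendsto (fun t => ∫ x in (0:ℝ)..1, |f t x - A|) atTop (nhds 0) := by
  have : IsProbabilityMeasure (volume.restrict (Ioc (0:ℝ) 1)) := ⟨by simp⟩
  simp only [intervalIntegral.integral_of_le zero_le_one] at hmean hconv ⊢
  rw [Metric.tendsto_nhds]
  intro ε hε
  obtain ⟨δ, hδ, hstable⟩ := hΦconv.exists_integral_abs_sub_lt
    (μ := volume.restrict (Ioc (0:ℝ) 1)) (hIopen.interior_eq.symm ▸ hA) hε
  filter_upwards [eventually_gt_atTop 0, hconv.eventually (eventually_lt_nhds hδ)]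
    with t ht hgap
  rw [Real.dist_eq, sub_zero, abs_of_nonneg (integral_nonneg fun _ => abs_nonneg _)]
  exact hstable (f t) (hfI t ht) ((hfc t ht).integrableOn_Ioc)
    ((hΦcont.comp_continuous (hfc t ht) (hfI t ht)).integrableOn_Ioc) (hmean t ht) hgap

/-- stability of Jensen's inequality. The torus 𝕋 is modeled by
    1-periodic functions on ℝ with integrals over [0,1]. -/
theorem stmt_19 (I : Set ℝ) (hIopen : IsOpen I) (hIconv : Convex ℝ I)
    (Φ : ℝ → ℝ) (hΦcont : ContinuousOn Φ I) (hΦconv : StrictConvexOn ℝ I Φ)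
    (A : ℝ) (hA : A ∈ I)
    (f : ℝ → ℝ → ℝ)
    (hfc : ∀ t > (0:ℝ), Continuous (f t))
    (hfper : ∀ t > (0:ℝ), Function.Periodic (f t) 1)
    (hfI : ∀ t > (0:ℝ), ∀ x, f t x ∈ I)
    (hmean : ∀ t > (0:ℝ), (∫ x in (0:ℝ)..1, f t x) = A)
    (hconv : Tendsto (fun t => (∫ x in (0:ℝ)..1, Φ (f t x)) - Φ A) atTop (nhds 0)) :
    Tendsto (fun t => ∫ x in (0:ℝ)..1, |f t x - A|) atTop (nhds 0) :=
  stmt_19_general I hIopen Φ hΦcont hΦconv A hA f hfc hfI hmean hconv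
end
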